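/- Let T be a tree and S = (S_A, S_B, S_C) a labeling of T such that (T, S) belongs to the family 𝒯. Then S_A is a semitotal dominating set of T. -/

import Mathlib

open SimpleGraph

/-- A dominating set: every vertex outside `S` has a neighbor in `S`. -/
def IsDominatingSet {V : Type} (G : SimpleGraph V) (S : Set V) : Prop :=
  ∀ v ∉ S, ∃ u ∈ S, G.Adj u v

/-- A total dominating set: every vertex has a neighbor in `S`. -/
def IsTotalDominatingSet {V : Type} (G : SimpleGraph V) (S : Set V) : Prop :=
  ∀ v : V, ∃ u ∈ S, G.Adj u v

/-- `u` is within distance two of `v`. -/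
def WithinTwo {V : Type} (G : SimpleGraph V) (u v : V) : Prop :=
  G.Adj u v ∨ ∃ w, G.Adj u w ∧ G.Adj w v

/-- A semitotal dominating set: a dominating set in which every vertex is within
distance two of another vertex of the set. -/
def IsSemitotalDominatingSet {V : Type} (G : SimpleGraph V) (S : Set V) : Prop :=
  IsDominatingSet G S ∧ ∀ v ∈ S, ∃ u ∈ S, u ≠ v ∧ WithinTwo G u v

/-- The domination number `γ(G)`. -/
noncomputable def dominationNumber {V : Type} (G : SimpleGraph V) : ℕ :=
  sInf {n | ∃ S : Set V, IsDominatingSet G S ∧ S.ncard = n}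

/-- The total domination number `γ_t(G)`. -/
noncomputable def totalDominationNumber {V : Type} (G : SimpleGraph V) : ℕ :=
  sInf {n | ∃ S : Set V, IsTotalDominatingSet G S ∧ S.ncard = n}

/-- The semitotal domination number `γ_t2(G)`. -/
noncomputable def semitotalDominationNumber {V : Type} (G : SimpleGraph V) : ℕ :=
  sInf {n | ∃ S : Set V, IsSemitotalDominatingSet G S ∧ S.ncard = n}

/-- A leaf: a vertex of degree one. -/
def IsLeaf {V : Type} (G : SimpleGraph V) (v : V) : Prop :=
  (G.neighborSet v).ncard = 1

/-- A support vertex: a vertex adjacent to a leaf. -/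
def IsSupport {V : Type} (G : SimpleGraph V) (v : V) : Prop :=
  ∃ u, G.Adj v u ∧ IsLeaf G u

/-- A star: a graph isomorphic to `K_{1,m}` for some `m ≥ 1`. -/
def IsStar {V : Type} (G : SimpleGraph V) : Prop :=
  ∃ m : ℕ, 1 ≤ m ∧ Nonempty (G ≃g completeBipartiteGraph Unit (Fin m))

/-- The graph obtained from the disjoint union of `G` and `H` by adding
the single edge joining `v : V` to `w : W`. -/
def attach {V W : Type} (G : SimpleGraph V) (H : SimpleGraph W) (v : V) (w : W) :
    SimpleGraph (V ⊕ W) where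
  Adj x y :=
    match x, y with
    | Sum.inl a, Sum.inl b => G.Adj a b
    | Sum.inr a, Sum.inr b => H.Adj a b
    | Sum.inl a, Sum.inr b => a = v ∧ b = w
    | Sum.inr a, Sum.inl b => b = v ∧ a = w
  symm := by
    constructor
    rintro (a | a) (b | b) h
    · exact G.adj_symm h
    · exact ⟨h.1, h.2⟩
    · exact ⟨h.1, h.2⟩
    · exact H.adj_symm h
  loopless := by
    constructor
    rintro (a | a) h
    · exact G.irrefl h
    · exact H.irrefl h

/-- The statuses used to label the vertices of trees in the family `𝒯`. -/
inductive Label : Type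
  | A | B | C
deriving DecidableEq

/-- The labeling of the path `P₅` assigning `A` to the two support vertices,
`C` to the two leaves and `B` to the center. -/
def pathLabel : Fin 5 → Label
  | 0 => Label.C
  | 1 => Label.A
  | 2 => Label.B
  | 3 => Label.A
  | 4 => Label.C

/-- The family `𝒯` of labeled trees: it contains the labeled path `P₅`, and is closed
under operation `𝒪₁` (attach a new leaf labeled `C` to a vertex labeled `A`), operation
`𝒪₂` (attach a labeled path `P₅` to a degree-one vertex labeled `C`), and under
isomorphism of labeled graphs. -/
inductive TFamily : ∀ {V : Type}, SimpleGraph V → (V → Label) → Prop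
  | base : TFamily (SimpleGraph.pathGraph 5) pathLabel
  | op1 {V : Type} {G : SimpleGraph V} {f : V → Label} (v : V)
      (hv : f v = Label.A) (h : TFamily G f) :
      TFamily (attach G (⊥ : SimpleGraph (Fin 1)) v 0)
        (Sum.elim f (fun _ => Label.C))
  | op2 {V : Type} {G : SimpleGraph V} {f : V → Label} (v : V)
      (hv : f v = Label.C) (hdeg : (G.neighborSet v).ncard = 1) (h : TFamily G f) :
      TFamily (attach G (SimpleGraph.pathGraph 5) v 0) (Sum.elim f pathLabel)
  | iso {V W : Type} {G : SimpleGraph V} {H : SimpleGraph W} {f : V → Label}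
      (e : G ≃g H) (h : TFamily G f) : TFamily H (fun w => f (e.symm w))

/-- The subdivided star with `t` leaves: center `none`, and for each `i : Fin t`
a path `none — some (i,0) — some (i,1)`. -/
def subdividedStar (t : ℕ) : SimpleGraph (Option (Fin t × Fin 2)) :=
  SimpleGraph.fromRel (fun x y =>
    match x, y with
    | none, some p => p.2 = 0
    | some p, some q => p.1 = q.1 ∧ p.2 = 0 ∧ q.2 = 1
    | _, _ => False)

/-- The tree `Y` with three leaves, obtained from the star `K_{1,3}` with center `0`
by subdividing exactly one edge: edges `0-1`, `0-2`, `0-3`, `3-4`.  Its leaves are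
`1`, `2`, `4`; the leaf-neighbors of the center are `1` and `2`. -/
def Ytree : SimpleGraph (Fin 5) :=
  SimpleGraph.fromRel (fun x y =>
    (x = 0 ∧ y = 1) ∨ (x = 0 ∧ y = 2) ∨ (x = 0 ∧ y = 3) ∨ (x = 3 ∧ y = 4))

/-- An almost dominating set of `G` relative to `v`: dominates every vertex except
possibly `v`. -/
def IsAlmostDominatingSet {V : Type} (G : SimpleGraph V) (v : V) (S : Set V) : Prop :=
  ∀ w, w ≠ v → w ∉ S → ∃ u ∈ S, G.Adj u w

/-- The almost domination number `γ(G; v)`. -/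
noncomputable def almostDominationNumber {V : Type} (G : SimpleGraph V) (v : V) : ℕ :=
  sInf {n | ∃ S : Set V, IsAlmostDominatingSet G v S ∧ S.ncard = n}

/-- The family `𝒪` of trees: all trees obtainable from the path `P₄` by a finite
sequence of the operations `𝒪₁`–`𝒪₄` (and taking isomorphic copies). -/
inductive OFamily : ∀ {V : Type}, SimpleGraph V → Prop
  | base : OFamily (SimpleGraph.pathGraph 4)
  | op1 {V : Type} {G : SimpleGraph V} (v : V)
      (hv : ∃ S : Set V, IsSemitotalDominatingSet G S ∧
        S.ncard = semitotalDominationNumber G ∧ v ∈ S)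
      (h : OFamily G) :
      OFamily (attach G (⊥ : SimpleGraph (Fin 1)) v 0)
  | op2short {V : Type} {G : SimpleGraph V} (v : V)
      (hv : almostDominationNumber G v = dominationNumber G) (h : OFamily G) :
      OFamily (attach G (SimpleGraph.pathGraph 2) v 0)
  | op2long {V : Type} {G : SimpleGraph V} (v : V)
      (hv : almostDominationNumber G v = dominationNumber G) (h : OFamily G) :
      OFamily (attach G (SimpleGraph.pathGraph 5) v 0)
  | op3 {V : Type} {G : SimpleGraph V} (v : V) (t : ℕ) (ht : 2 ≤ t) (h : OFamily G) :
      OFamily (attach G (subdividedStar t) v none)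
  | op4 {V : Type} {G : SimpleGraph V} (v : V) (h : OFamily G) :
      OFamily (attach G Ytree v 1)
  | iso {V W : Type} {G : SimpleGraph V} {H : SimpleGraph W}
      (e : G ≃g H) (h : OFamily G) : OFamily H

/-! The witnesses required of `S_A` (a neighbour in `S_A` for a vertex outside it, another
vertex of `S_A` within distance two for a vertex inside it) can be found within the piece in
which the vertex was created: the initial `P₅` or a copy glued on by `𝒪₂`, where the two
support vertices do the job, or, for a leaf added by `𝒪₁`, its neighbour of status `A`.
Such witnesses survive gluing along an edge and transport along isomorphisms. -/

section

variable {V W : Type} {G : SimpleGraph V} {H : SimpleGraph W}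

theorem WithinTwo.map (φ : G →g H) {u v : V} (h : WithinTwo G u v) :
    WithinTwo H (φ u) (φ v) := by
  rcases h with h | ⟨w, huw, hwv⟩
  · exact .inl (φ.map_adj h)
  · exact .inr ⟨φ w, φ.map_adj huw, φ.map_adj hwv⟩

namespace IsSemitotalDominatingSet

variable {T : Set W} {φ : G ↪g H}

theorem exists_adj_of_embedding (hT : IsSemitotalDominatingSet G (φ ⁻¹' T)) {a : V}
    (ha : φ a ∉ T) : ∃ u ∈ T, H.Adj u (φ a) :=
  let ⟨u, hu, hua⟩ := hT.1 a ha
  ⟨φ u, hu, φ.map_adj_iff.2 hua⟩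

theorem exists_withinTwo_of_embedding (hT : IsSemitotalDominatingSet G (φ ⁻¹' T)) {a : V}
    (ha : φ a ∈ T) : ∃ u ∈ T, u ≠ φ a ∧ WithinTwo H u (φ a) :=
  let ⟨u, hu, hua, hw⟩ := hT.2 a ha
  ⟨φ u, hu, φ.injective.ne hua, hw.map φ.toHom⟩

end IsSemitotalDominatingSet

theorem IsSemitotalDominatingSet.preimage_iso {S : Set V} (e : H ≃g G)
    (hS : IsSemitotalDominatingSet G S) : IsSemitotalDominatingSet H (e ⁻¹' S) := by
  have hT : IsSemitotalDominatingSet G (e.symm.toEmbedding ⁻¹' (e ⁻¹' S)) := by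
    simpa [Set.preimage_preimage] using hS
  refine ⟨fun x hx => ?_, fun x hx => ?_⟩ <;> rw [← e.symm_apply_apply x] at hx ⊢
  · exact hT.exists_adj_of_embedding hx
  · exact hT.exists_withinTwo_of_embedding hx

def attachInl (G : SimpleGraph V) (H : SimpleGraph W) (v : V) (w : W) : G ↪g attach G H v w :=
  ⟨Function.Embedding.inl, Iff.rfl⟩

def attachInr (G : SimpleGraph V) (H : SimpleGraph W) (v : V) (w : W) : H ↪g attach G H v w :=
  ⟨Function.Embedding.inr, Iff.rfl⟩

theorem isSemitotalDominatingSet_attach {T : Set (V ⊕ W)} (v : V) (w : W)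
    (hG : IsSemitotalDominatingSet G (Sum.inl ⁻¹' T))
    (hH : IsSemitotalDominatingSet H (Sum.inr ⁻¹' T)) :
    IsSemitotalDominatingSet (attach G H v w) T := by
  have hG' : IsSemitotalDominatingSet G (attachInl G H v w ⁻¹' T) := hG
  have hH' : IsSemitotalDominatingSet H (attachInr G H v w ⁻¹' T) := hH
  refine ⟨?_, ?_⟩ <;> rintro (a | a) ha
  · exact hG'.exists_adj_of_embedding ha
  · exact hH'.exists_adj_of_embedding ha
  · exact hG'.exists_withinTwo_of_embedding ha
  · exact hH'.exists_withinTwo_of_embedding ha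

theorem isSemitotalDominatingSet_attach_of_subsingleton [Subsingleton W] {T : Set (V ⊕ W)}
    {v : V} (w : W) (hv : Sum.inl v ∈ T) (hG : IsSemitotalDominatingSet G (Sum.inl ⁻¹' T)) :
    IsSemitotalDominatingSet (attach G H v w) T := by
  have hG' : IsSemitotalDominatingSet G (attachInl G H v w ⁻¹' T) := hG
  have hvw (b : W) : (attach G H v w).Adj (Sum.inl v) (Sum.inr b) :=
    ⟨rfl, Subsingleton.elim b w⟩
  refine ⟨?_, ?_⟩ <;> rintro (a | b) ha
  · exact hG'.exists_adj_of_embedding ha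
  · exact ⟨Sum.inl v, hv, hvw b⟩
  · exact hG'.exists_withinTwo_of_embedding ha
  · exact ⟨Sum.inl v, hv, Sum.inl_ne_inr, .inl (hvw b)⟩

theorem isSemitotalDominatingSet_pathLabel :
    IsSemitotalDominatingSet (pathGraph 5) {i | pathLabel i = Label.A} := by
  simp only [IsSemitotalDominatingSet, IsDominatingSet, WithinTwo, Set.mem_ofPred_eq,
    pathGraph_adj]
  decide

end

theorem tFamily_A_isSemitotalDominatingSet_general {V : Type} (T : SimpleGraph V)
    (f : V → Label) (h : TFamily T f) :
    IsSemitotalDominatingSet T {v : V | f v = Label.A} := by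
  induction h with
  | base => exact isSemitotalDominatingSet_pathLabel
  | op1 v hv _ ih => exact isSemitotalDominatingSet_attach_of_subsingleton 0 hv ih
  | op2 v _ _ _ ih =>
    exact isSemitotalDominatingSet_attach v 0 ih isSemitotalDominatingSet_pathLabel
  | iso e _ ih => exact ih.preimage_iso e.symm

/-- If `(T, S) ∈ 𝒯`, then `S_A` is a semitotal dominating set of `T`. -/
theorem tFamily_A_isSemitotalDominatingSet {V : Type} [Fintype V] (T : SimpleGraph V)
    (f : V → Label) (hT : T.IsTree) (h : TFamily T f) :
    IsSemitotalDominatingSet T {v : V | f v = Label.A} :=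
  tFamily_A_isSemitotalDominatingSet_general T f h
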